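/- Let α > 1, and suppose the output U of robust pruning at p contains two points u, w whose distances to p both lie in the interval (r, 2r] for some r > 0. Then D(u,w) > r/α. Moreover, within any subset S of P of diameter at most r/α contained in the annulus {q : r < D(p,q) ≤ 2r}, at most one point of S survives the pruning. -/

import Mathlib

/-- Robust pruning at `p` with parameter `α`: the input list is the candidate set sorted by
increasing distance to `p`; the closest unpruned point `u` is selected, and every remaining
point `w` with `α * dist u w < dist p w` is deleted. -/
noncomputable def robustPrune {X : Type*} [MetricSpace X] (α : ℝ) (p : X) : List X → List X
  | [] => []
  | u :: rest =>
      u :: robustPrune α p (rest.filter fun w => decide (dist p w ≤ α * dist u w))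
termination_by l => l.length
decreasing_by
  simpa using Nat.lt_succ_of_le ((List.length_filter_le _ rest.attach).trans_eq (List.length_attach ..))


theorem mem_of_mem_robustPrune {X : Type*} [MetricSpace X] (α : ℝ) (p : X) :
    ∀ l : List X, ∀ w ∈ robustPrune α p l, w ∈ l := by
  intro l
  induction l using robustPrune.induct α p with
  | case1 => simp [robustPrune]
  | case2 u rest ih =>
    intro w hw
    rw [robustPrune] at hw
    rcases List.mem_cons.1 hw with h | h
    · simp [h]
    · exact List.mem_cons_of_mem _ (List.mem_of_mem_filter (by rw [List.unattach_filter (g := fun w => decide (dist p w ≤ α * dist u w)) (hf := fun _ _ => rfl), List.unattach_attach] at ih; exact ih w h))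

theorem robustPrune_pairwise {X : Type*} [MetricSpace X] (α : ℝ) (p : X) :
    ∀ l : List X, (robustPrune α p l).Pairwise fun u w => dist p w ≤ α * dist u w := by
  intro l
  induction l using robustPrune.induct α p with
  | case1 => simp [robustPrune]
  | case2 u rest ih =>
    rw [robustPrune]
    refine List.pairwise_cons.2 ⟨?_, by rw [List.unattach_filter (g := fun w => decide (dist p w ≤ α * dist u w)) (hf := fun _ _ => rfl), List.unattach_attach] at ih; exact ih⟩
    intro w hw
    have := mem_of_mem_robustPrune α p _ w hw
    have := List.of_mem_filter this
    simpa using this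

/-- If the output of robust pruning at `p` contains two points whose distances
to `p` both lie in `(r, 2r]`, then their mutual distance exceeds `r/α`; moreover, any subset
`S ⊆ P` of diameter at most `r/α` contained in the annulus `{q : r < dist p q ≤ 2r}` has at
most one point surviving the pruning. -/
theorem robustPrune_annulus_separation {X : Type*} [MetricSpace X]
    (α : ℝ) (hα : 1 < α) (P : Finset X) (p : X) (hp : p ∈ P)
    (L : List X) (hL : ∀ q, q ∈ L ↔ q ∈ P ∧ q ≠ p) (hnodup : L.Nodup)
    (hsorted : L.Pairwise fun a b => dist p a ≤ dist p b)
    (r : ℝ) (hr : 0 < r) :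
    (∀ u ∈ robustPrune α p L, ∀ w ∈ robustPrune α p L, u ≠ w →
      r < dist p u → dist p u ≤ 2 * r → r < dist p w → dist p w ≤ 2 * r →
      r / α < dist u w) ∧
    (∀ S : Finset X, (S : Set X) ⊆ (P : Set X) →
      (∀ x ∈ S, ∀ y ∈ S, dist x y ≤ r / α) →
      (∀ x ∈ S, r < dist p x ∧ dist p x ≤ 2 * r) →
      ∀ x ∈ S, ∀ y ∈ S, x ∈ robustPrune α p L → y ∈ robustPrune α p L → x = y) := by
  have hα0 : (0:ℝ) < α := lt_trans one_pos hα
  have key : ∀ u ∈ robustPrune α p L, ∀ w ∈ robustPrune α p L, u ≠ w →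
      dist p w ≤ α * dist u w ∨ dist p u ≤ α * dist w u := by
    have hpw : (robustPrune α p L).Pairwise
        (fun u w => dist p w ≤ α * dist u w ∨ dist p u ≤ α * dist w u) :=
      (robustPrune_pairwise α p L).imp (fun h => Or.inl h)
    intro u hu w hw huw
    exact (letI : Std.Symm (fun u w : X => dist p w ≤ α * dist u w ∨ dist p u ≤ α * dist w u) :=
      ⟨fun a b h => h.symm⟩; hpw.forall hu hw huw)
  have main : ∀ u ∈ robustPrune α p L, ∀ w ∈ robustPrune α p L, u ≠ w →
      r < dist p u → r < dist p w → r / α < dist u w := by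
    intro u hu w hw huw hru hrw
    rcases key u hu w hw huw with h | h
    · rw [div_lt_iff₀ hα0, mul_comm]
      exact lt_of_lt_of_le hrw h
    · rw [div_lt_iff₀ hα0, mul_comm, dist_comm]
      exact lt_of_lt_of_le hru h
  refine ⟨fun u hu w hw huw h1 _ h2 _ => main u hu w hw huw h1 h2, ?_⟩
  intro S _ hdiam hann x hx y hy hxP hyP
  by_contra hxy
  exact absurd (hdiam x hx y hy)
    (not_le.2 (main x hxP y hyP hxy (hann x hx).1 (hann y hy).1))
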